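/- arXiv:1104.1484 — 9 statements merged into one kernel-verified Lean document; each statement's English description precedes it below -/
import Mathlib

section
/- Let Λ be a profinite ring whose open two-sided ideals form a fundamental system of neighborhoods of 0. Let M be a finitely generated left Λ-module and let N be a discrete Λ-module (a Λ-module with the discrete topology on which scalar multiplication Λ × N → N is continuous). Then for every (abstract) Λ-linear map f : M → N there exists an open two-sided ideal 𝔞 of Λ such that f(𝔞M) = 0; in particular f is continuous for the ℐ-adic topology on M. -/
/-!
Since `N` is discrete, each element `n` of `N` is killed by a neighbourhood of `0` in `Λ`, hence
by an open two-sided ideal. Choosing one inside the finite intersection for the images of a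
finite generating set of `M`, the ideal kills `f` on all of `M`, because the elements of `N`
killed by a right ideal form a submodule.
-/

open Filter Topology

theorem setOf_smul_eq_zero_mem_nhds_zero {R N : Type*} [Semiring R] [TopologicalSpace R]
    [AddCommMonoid N] [Module R N] [TopologicalSpace N] [DiscreteTopology N]
    [ContinuousSMul R N] (n : N) : {a : R | a • n = 0} ∈ 𝓝 0 :=
  ((isOpen_discrete {0}).preimage (continuous_id.smul continuous_const)).mem_nhds (zero_smul R n)

theorem TwoSidedIdeal.smul_map_eq_zero_of_mem_span {Λ M N : Type*} [Ring Λ]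
    [AddCommGroup M] [Module Λ M] [AddCommGroup N] [Module Λ N] (𝔞 : TwoSidedIdeal Λ)
    (f : M →ₗ[Λ] N) {s : Set M} (hs : ∀ m ∈ s, ∀ a ∈ 𝔞, a • f m = 0)
    {m : M} (hm : m ∈ Submodule.span Λ s) : ∀ a ∈ 𝔞, a • f m = 0 := by
  induction hm using Submodule.span_induction with
  | mem z hz => exact hs z hz
  | zero => simp
  | add y z _ _ hy hz => intro a ha; rw [map_add, smul_add, hy a ha, hz a ha, add_zero]
  | smul c z _ hz =>
    intro a ha
    rw [map_smul, smul_smul]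
    exact hz (a * c) (𝔞.mul_mem_right _ _ ha)

theorem TwoSidedIdeal.span_smul_le_ker {Λ M N : Type*} [Ring Λ]
    [AddCommGroup M] [Module Λ M] [AddCommGroup N] [Module Λ N] (𝔞 : TwoSidedIdeal Λ)
    (f : M →ₗ[Λ] N) {s : Set M} (hspan : Submodule.span Λ s = ⊤)
    (hs : ∀ m ∈ s, ∀ a ∈ 𝔞, a • f m = 0) :
    Submodule.span Λ {y : M | ∃ a ∈ 𝔞, ∃ m : M, y = a • m} ≤ LinearMap.ker f := by
  rw [Submodule.span_le]
  rintro _ ⟨a, ha, m, rfl⟩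
  have hm : m ∈ Submodule.span Λ s := hspan ▸ Submodule.mem_top
  simpa using 𝔞.smul_map_eq_zero_of_mem_span f hs hm a ha

theorem statement2_general
    (Λ : Type*) [Ring Λ] [TopologicalSpace Λ]
    (hbasis : (nhds (0 : Λ)).HasBasis
      (fun 𝔞 : TwoSidedIdeal Λ => IsOpen (𝔞 : Set Λ)) (fun 𝔞 => (𝔞 : Set Λ)))
    (M : Type*) [AddCommGroup M] [Module Λ M] [Module.Finite Λ M]
    (N : Type*) [AddCommGroup N] [Module Λ N] [TopologicalSpace N]
    [DiscreteTopology N] [ContinuousSMul Λ N]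
    (f : M →ₗ[Λ] N) :
    ∃ 𝔞 : TwoSidedIdeal Λ, IsOpen (𝔞 : Set Λ) ∧
      ∀ x ∈ Submodule.span Λ {y : M | ∃ a ∈ 𝔞, ∃ m : M, y = a • m}, f x = 0 := by
  obtain ⟨s, hs⟩ := Module.Finite.fg_top (R := Λ) (M := M)
  have hkill : ⋂ m ∈ s, {a : Λ | a • f m = 0} ∈ 𝓝 0 :=
    (biInter_finset_mem s).2 fun m _ => setOf_smul_eq_zero_mem_nhds_zero (f m)
  obtain ⟨𝔞, h𝔞, hsub⟩ := hbasis.mem_iff.1 hkill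
  refine ⟨𝔞, h𝔞, fun x hx => 𝔞.span_smul_le_ker f hs ?_ hx⟩
  intro m hm a ha
  exact Set.mem_iInter₂.1 (hsub ha) m hm

/-- Let `Λ` be a profinite ring whose open two-sided ideals form a
fundamental system of neighborhoods of `0`.  Let `M` be a finitely generated left
`Λ`-module and `N` a discrete topological `Λ`-module.  Then every abstract
`Λ`-linear map `f : M → N` kills `𝔞M` for some open two-sided ideal `𝔞` of `Λ`
(equivalently, `f` is continuous for the `ℐ`-adic topology on `M`). -/
theorem statement2
    (Λ : Type*) [Ring Λ] [TopologicalSpace Λ] [IsTopologicalRing Λ]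
    [CompactSpace Λ] [T2Space Λ] [TotallyDisconnectedSpace Λ]
    (hbasis : (nhds (0 : Λ)).HasBasis
      (fun 𝔞 : TwoSidedIdeal Λ => IsOpen (𝔞 : Set Λ)) (fun 𝔞 => (𝔞 : Set Λ)))
    (M : Type*) [AddCommGroup M] [Module Λ M] [Module.Finite Λ M]
    (N : Type*) [AddCommGroup N] [Module Λ N] [TopologicalSpace N]
    [DiscreteTopology N] [ContinuousSMul Λ N]
    (f : M →ₗ[Λ] N) :
    ∃ 𝔞 : TwoSidedIdeal Λ, IsOpen (𝔞 : Set Λ) ∧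
      ∀ x ∈ Submodule.span Λ {y : M | ∃ a ∈ 𝔞, ∃ m : M, y = a • m}, f x = 0 :=
  statement2_general Λ hbasis M N f
end

section
/- Let Λ be a profinite ring whose open two-sided ideals form a fundamental system of neighborhoods of 0, and let M be a compact Hausdorff topological Λ-module. Then for every open Λ-submodule N of M there exists an open two-sided ideal 𝔞 of Λ with 𝔞M ⊆ N; that is, the ℐ-adic topology on M is finer than the given topology. -/
open Filter Topology

theorem eventually_forall_smul_mem_of_compactSpace {R M : Type*} [Zero R] [Zero M]
    [SMulWithZero R M] [TopologicalSpace R] [TopologicalSpace M] [ContinuousSMul R M]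
    [CompactSpace M] {U : Set M} (hU : U ∈ 𝓝 0) :
    ∀ᶠ a in 𝓝 (0 : R), ∀ m : M, a • m ∈ U := by
  have hsmul (m : M) : ∀ᶠ p : R × M in 𝓝 (0, m), p.1 • p.2 ∈ U :=
    (continuous_smul.tendsto ((0 : R), m)).eventually_mem (by simpa using hU)
  simpa using isCompact_univ.eventually_forall_of_forall_eventually fun m _ => hsmul m

theorem statement5_general
    (Λ : Type*) [Ring Λ] [TopologicalSpace Λ]
    (hbasis : (nhds (0 : Λ)).HasBasis
      (fun 𝔞 : TwoSidedIdeal Λ => IsOpen (𝔞 : Set Λ)) (fun 𝔞 => (𝔞 : Set Λ)))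
    (M : Type*) [AddCommGroup M] [Module Λ M] [TopologicalSpace M]
    [CompactSpace M] [ContinuousSMul Λ M]
    (N : Submodule Λ M) (hN : IsOpen (N : Set M)) :
    ∃ 𝔞 : TwoSidedIdeal Λ, IsOpen (𝔞 : Set Λ) ∧
      Submodule.span Λ {y : M | ∃ a ∈ 𝔞, ∃ m : M, y = a • m} ≤ N := by
  obtain ⟨𝔞, h𝔞, h𝔞N⟩ := hbasis.eventually_iff.mp
    (eventually_forall_smul_mem_of_compactSpace (R := Λ) (hN.mem_nhds N.zero_mem))
  refine ⟨𝔞, h𝔞, Submodule.span_le.mpr ?_⟩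
  rintro _ ⟨a, ha, m, rfl⟩
  exact h𝔞N ha m

/-- Let `Λ` be a profinite ring whose open two-sided ideals form a
fundamental system of neighborhoods of `0`, and let `M` be a compact Hausdorff
topological `Λ`-module.  Then every open `Λ`-submodule `N` of `M` contains `𝔞M` for
some open two-sided ideal `𝔞` of `Λ`; that is, the `ℐ`-adic topology on `M` is finer
than the given topology. -/
theorem statement5
    (Λ : Type*) [Ring Λ] [TopologicalSpace Λ] [IsTopologicalRing Λ]
    [CompactSpace Λ] [T2Space Λ] [TotallyDisconnectedSpace Λ]
    (hbasis : (nhds (0 : Λ)).HasBasis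
      (fun 𝔞 : TwoSidedIdeal Λ => IsOpen (𝔞 : Set Λ)) (fun 𝔞 => (𝔞 : Set Λ)))
    (M : Type*) [AddCommGroup M] [Module Λ M] [TopologicalSpace M]
    [IsTopologicalAddGroup M] [CompactSpace M] [T2Space M] [ContinuousSMul Λ M]
    (N : Submodule Λ M) (hN : IsOpen (N : Set M)) :
    ∃ 𝔞 : TwoSidedIdeal Λ, IsOpen (𝔞 : Set Λ) ∧
      Submodule.span Λ {y : M | ∃ a ∈ 𝔞, ∃ m : M, y = a • m} ≤ N :=
  statement5_general Λ hbasis M N hN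
end

section
/- Let Λ be a profinite ring whose open two-sided ideals form a fundamental system of neighborhoods of 0, and let M be a profinite topological Λ-module that is finitely generated as a Λ-module. Then the submodules 𝔞M, for 𝔞 ranging over the open two-sided ideals of Λ, form a fundamental system of neighborhoods of 0 in M (i.e., the topology of M is the ℐ-adic topology), and the canonical Λ-module homomorphism M → lim_{𝔞} M/𝔞M is bijective. -/
/-- The submodule `𝔞M` of `M` generated by products `a • m` with `a ∈ 𝔞`. -/
def smulSub {Λ : Type*} [Ring Λ] (𝔞 : TwoSidedIdeal Λ)
    (M : Type*) [AddCommGroup M] [Module Λ M] : Submodule Λ M :=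
  Submodule.span Λ {y : M | ∃ a ∈ 𝔞, ∃ m : M, y = a • m}

theorem smulSub_mono {Λ : Type*} [Ring Λ] {M : Type*} [AddCommGroup M] [Module Λ M]
    {𝔞 𝔟 : TwoSidedIdeal Λ} (h : 𝔞 ≤ 𝔟) : smulSub 𝔞 M ≤ smulSub 𝔟 M :=
  Submodule.span_mono (fun x hx => by
    obtain ⟨a, ha, m, rfl⟩ := hx; exact ⟨a, h ha, m, rfl⟩)

/-!
Choose a Λ-linear surjection `g : Λⁿ → M`. It is continuous, and as `Λⁿ` is compact and `M`
Hausdorff it is a quotient map, hence open, being a homomorphism of topological groups. Since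
`𝔞M = g(𝔞ⁿ)` and the `𝔞ⁿ` form a basis at `0` of `Λⁿ`, the `𝔞M` form a basis at `0` of `M`.
Injectivity of `M → lim M/𝔞M` is then the Hausdorff property, and surjectivity is Cantor's
intersection theorem for the compatible cosets `x_𝔞 + 𝔞M`, closed because open subgroups are.
-/

open Filter Topology

section

variable {Λ : Type*} [Ring Λ] {M N : Type*} [AddCommGroup M] [Module Λ M]
  [AddCommGroup N] [Module Λ N]

theorem map_smulSub_of_surjective (𝔞 : TwoSidedIdeal Λ) {g : N →ₗ[Λ] M}
    (hg : Function.Surjective g) : (smulSub 𝔞 N).map g = smulSub 𝔞 M := by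
  rw [smulSub, smulSub, Submodule.map_span]
  congr 1
  ext y
  constructor
  · rintro ⟨_, ⟨a, ha, n, rfl⟩, rfl⟩
    exact ⟨a, ha, g n, map_smul g a n⟩
  · rintro ⟨a, ha, m, rfl⟩
    obtain ⟨n, rfl⟩ := hg m
    exact ⟨a • n, ⟨a, ha, n, rfl⟩, map_smul g a n⟩

theorem coe_smulSub_pi {ι : Type*} [Finite ι] (𝔞 : TwoSidedIdeal Λ) :
    (smulSub 𝔞 (ι → Λ) : Set (ι → Λ)) = Set.univ.pi fun _ => (𝔞 : Set Λ) := by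
  apply subset_antisymm
  · have : smulSub 𝔞 (ι → Λ) ≤ Submodule.pi Set.univ fun _ => 𝔞.asIdeal := by
      refine Submodule.span_le.mpr ?_
      rintro _ ⟨a, ha, x, rfl⟩ i -
      exact TwoSidedIdeal.mem_asIdeal.mpr (𝔞.mul_mem_right _ _ ha)
    exact fun x hx i _ => TwoSidedIdeal.mem_asIdeal.mp (this hx i trivial)
  · intro x hx
    classical
    cases nonempty_fintype ι
    rw [pi_eq_sum_univ x]
    exact Submodule.sum_mem _ fun i _ => Submodule.subset_span ⟨x i, hx i trivial, _, rfl⟩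

theorem hasBasis_nhds_zero_smulSub_of_isOpenQuotientMap {p : TwoSidedIdeal Λ → Prop}
    [TopologicalSpace M] [TopologicalSpace N] {g : N →ₗ[Λ] M} (hg : IsOpenQuotientMap g)
    (hN : (𝓝 (0 : N)).HasBasis p fun 𝔞 => (smulSub 𝔞 N : Set N)) :
    (𝓝 (0 : M)).HasBasis p fun 𝔞 => (smulSub 𝔞 M : Set M) := by
  have := hN.map g
  rw [hg.map_nhds_eq, map_zero] at this
  simpa only [← Submodule.map_coe, map_smulSub_of_surjective _ hg.surjective] using this

theorem Submodule.exists_mk_eq_of_compatible {ι : Type*} [Preorder ι] [IsCodirectedOrder ι]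
    [Nonempty ι] [TopologicalSpace M] [IsTopologicalAddGroup M] [CompactSpace M]
    {N : ι → Submodule Λ M} (hN : Monotone N) (hclosed : ∀ i, IsClosed (N i : Set M))
    (φ : ∀ i, M ⧸ N i) (hφ : ∀ i j (h : i ≤ j), (N i).mapQ (N j) LinearMap.id (hN h) (φ i) = φ j) :
    ∃ x, ∀ i, Submodule.Quotient.mk x = φ i := by
  set S : ι → Set M := fun i => {x | Submodule.Quotient.mk x = φ i}
  have hS_closed (i : ι) : IsClosed (S i) := by
    obtain ⟨x₀, hx₀⟩ := Submodule.Quotient.mk_surjective _ (φ i)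
    have : S i = (· - x₀) ⁻¹' N i := by
      ext x
      simp [S, ← hx₀, Submodule.Quotient.eq]
    exact this ▸ (hclosed i).preimage (continuous_sub_right x₀)
  have hS_dir : Directed (· ⊇ ·) S := fun i j => by
    obtain ⟨k, hki, hkj⟩ := directed_of (· ≥ ·) i j
    exact ⟨k, fun x hx => (congrArg _ hx).trans (hφ k i hki),
      fun x hx => (congrArg _ hx).trans (hφ k j hkj)⟩
  obtain ⟨x, hx⟩ := IsCompact.nonempty_iInter_of_directed_nonempty_isCompact_isClosed S hS_dir
    (fun i => Submodule.Quotient.mk_surjective _ (φ i)) (fun i => (hS_closed i).isCompact)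
    hS_closed
  exact ⟨x, Set.mem_iInter.mp hx⟩

variable [TopologicalSpace Λ]

theorem hasBasis_nhds_zero_smulSub_pi {ι : Type*} [Finite ι]
    (hbasis : (𝓝 (0 : Λ)).HasBasis
      (fun 𝔞 : TwoSidedIdeal Λ => IsOpen (𝔞 : Set Λ)) (fun 𝔞 => (𝔞 : Set Λ))) :
    (𝓝 (0 : ι → Λ)).HasBasis (fun 𝔞 : TwoSidedIdeal Λ => IsOpen (𝔞 : Set Λ))
      (fun 𝔞 => (smulSub 𝔞 (ι → Λ) : Set (ι → Λ))) := by
  simp only [coe_smulSub_pi]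
  rw [nhds_pi]
  exact hbasis.pi_self.to_hasBasis
    (fun I h => ⟨I.2, h.2, Set.pi_mono' (fun _ _ => subset_rfl) (Set.subset_univ _)⟩)
    (fun 𝔞 h𝔞 => ⟨(Set.univ, 𝔞), ⟨Set.finite_univ, h𝔞⟩, subset_rfl⟩)

theorem hasBasis_nhds_zero_smulSub [ContinuousAdd Λ] [CompactSpace Λ]
    (hbasis : (𝓝 (0 : Λ)).HasBasis
      (fun 𝔞 : TwoSidedIdeal Λ => IsOpen (𝔞 : Set Λ)) (fun 𝔞 => (𝔞 : Set Λ)))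
    [Module.Finite Λ M] [TopologicalSpace M] [ContinuousAdd M] [T2Space M]
    [ContinuousSMul Λ M] :
    (𝓝 (0 : M)).HasBasis (fun 𝔞 : TwoSidedIdeal Λ => IsOpen (𝔞 : Set Λ))
      (fun 𝔞 => (smulSub 𝔞 M : Set M)) := by
  obtain ⟨n, g, hg⟩ := Module.Finite.exists_fin' Λ M
  have hq : IsQuotientMap g := .of_surjective_continuous hg g.continuous_on_pi
  exact hasBasis_nhds_zero_smulSub_of_isOpenQuotientMap
    (AddMonoidHom.isOpenQuotientMap_of_isQuotientMap hq) (hasBasis_nhds_zero_smulSub_pi hbasis)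

end

theorem statement7_general
    (Λ : Type*) [Ring Λ] [TopologicalSpace Λ] [IsTopologicalRing Λ]
    [CompactSpace Λ]
    (hbasis : (nhds (0 : Λ)).HasBasis
      (fun 𝔞 : TwoSidedIdeal Λ => IsOpen (𝔞 : Set Λ)) (fun 𝔞 => (𝔞 : Set Λ)))
    (M : Type*) [AddCommGroup M] [Module Λ M] [Module.Finite Λ M] [TopologicalSpace M]
    [IsTopologicalAddGroup M] [CompactSpace M] [T2Space M]
    [ContinuousSMul Λ M] :
    (nhds (0 : M)).HasBasis (fun 𝔞 : TwoSidedIdeal Λ => IsOpen (𝔞 : Set Λ))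
      (fun 𝔞 => (smulSub 𝔞 M : Set M)) ∧
    Function.Bijective (fun x : M =>
      (⟨fun 𝔞 : {𝔞 : TwoSidedIdeal Λ // IsOpen ((𝔞 : TwoSidedIdeal Λ) : Set Λ)} =>
          Submodule.Quotient.mk (p := smulSub 𝔞.1 M) x,
        fun _ _ _ => rfl⟩ :
        {φ : ∀ 𝔞 : {𝔞 : TwoSidedIdeal Λ // IsOpen ((𝔞 : TwoSidedIdeal Λ) : Set Λ)},
            M ⧸ smulSub 𝔞.1 M //
          ∀ (𝔞 𝔟 : {𝔞 : TwoSidedIdeal Λ // IsOpen ((𝔞 : TwoSidedIdeal Λ) : Set Λ)})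
            (h : 𝔞.1 ≤ 𝔟.1),
            Submodule.mapQ (smulSub 𝔞.1 M) (smulSub 𝔟.1 M) LinearMap.id
              (fun x hx => smulSub_mono h hx) (φ 𝔞) = φ 𝔟})) := by
  have hB := hasBasis_nhds_zero_smulSub hbasis (M := M)
  refine ⟨hB, fun x y hxy => ?_, fun ⟨φ, hφ⟩ => ?_⟩
  · have hxy : x - y ∈ ⋂ (𝔞 : TwoSidedIdeal Λ) (_ : IsOpen (𝔞 : Set Λ)),
        (smulSub 𝔞 M : Set M) := Set.mem_iInter₂.mpr fun 𝔞 h𝔞 =>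
        (Submodule.Quotient.eq _).mp (congrArg (fun φ => φ.1 ⟨𝔞, h𝔞⟩) hxy)
    rw [biInter_basis_nhds hB] at hxy
    exact sub_eq_zero.mp hxy
  · have : IsCodirectedOrder {𝔞 : TwoSidedIdeal Λ // IsOpen (𝔞 : Set Λ)} :=
      ⟨fun 𝔞 𝔟 => ⟨⟨𝔞.1 ⊓ 𝔟.1, 𝔞.2.inter 𝔟.2⟩,
        inf_le_left (b := 𝔟.1), inf_le_right (a := 𝔞.1)⟩⟩
    have : Nonempty {𝔞 : TwoSidedIdeal Λ // IsOpen (𝔞 : Set Λ)} := ⟨⟨⊤, isOpen_univ⟩⟩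
    have hclosed (𝔞 : {𝔞 : TwoSidedIdeal Λ // IsOpen (𝔞 : Set Λ)}) :
        IsClosed (smulSub 𝔞.1 M : Set M) :=
      AddSubgroup.isClosed_of_isOpen (smulSub 𝔞.1 M).toAddSubgroup
        (AddSubgroup.isOpen_of_mem_nhds _ (hB.mem_of_mem 𝔞.2))
    have hmono : Monotone fun 𝔞 : {𝔞 : TwoSidedIdeal Λ // IsOpen (𝔞 : Set Λ)} =>
        smulSub 𝔞.1 M := fun _ _ h => smulSub_mono h
    obtain ⟨x, hx⟩ := Submodule.exists_mk_eq_of_compatible hmono hclosed φ hφ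
    exact ⟨x, Subtype.ext (funext hx)⟩

/-- Let `Λ` be a profinite ring whose open two-sided ideals form a
fundamental system of neighborhoods of `0`, and let `M` be a profinite topological
`Λ`-module that is finitely generated over `Λ`.  Then the submodules `𝔞M`, for `𝔞`
an open two-sided ideal of `Λ`, form a fundamental system of neighborhoods of `0`
in `M`, and the canonical map `M → lim_𝔞 M/𝔞M` is bijective. -/
theorem statement7
    (Λ : Type*) [Ring Λ] [TopologicalSpace Λ] [IsTopologicalRing Λ]
    [CompactSpace Λ] [T2Space Λ] [TotallyDisconnectedSpace Λ]
    (hbasis : (nhds (0 : Λ)).HasBasis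
      (fun 𝔞 : TwoSidedIdeal Λ => IsOpen (𝔞 : Set Λ)) (fun 𝔞 => (𝔞 : Set Λ)))
    (M : Type*) [AddCommGroup M] [Module Λ M] [Module.Finite Λ M] [TopologicalSpace M]
    [IsTopologicalAddGroup M] [CompactSpace M] [T2Space M] [TotallyDisconnectedSpace M]
    [ContinuousSMul Λ M] :
    (nhds (0 : M)).HasBasis (fun 𝔞 : TwoSidedIdeal Λ => IsOpen (𝔞 : Set Λ))
      (fun 𝔞 => (smulSub 𝔞 M : Set M)) ∧
    Function.Bijective (fun x : M =>
      (⟨fun 𝔞 : {𝔞 : TwoSidedIdeal Λ // IsOpen ((𝔞 : TwoSidedIdeal Λ) : Set Λ)} =>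
          Submodule.Quotient.mk (p := smulSub 𝔞.1 M) x,
        fun _ _ _ => rfl⟩ :
        {φ : ∀ 𝔞 : {𝔞 : TwoSidedIdeal Λ // IsOpen ((𝔞 : TwoSidedIdeal Λ) : Set Λ)},
            M ⧸ smulSub 𝔞.1 M //
          ∀ (𝔞 𝔟 : {𝔞 : TwoSidedIdeal Λ // IsOpen ((𝔞 : TwoSidedIdeal Λ) : Set Λ)})
            (h : 𝔞.1 ≤ 𝔟.1),
            Submodule.mapQ (smulSub 𝔞.1 M) (smulSub 𝔟.1 M) LinearMap.id
              (fun x hx => smulSub_mono h hx) (φ 𝔞) = φ 𝔟})) :=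
  statement7_general Λ hbasis M
end

section
/- Let Λ be a profinite ring whose open two-sided ideals form a fundamental system of neighborhoods of 0, and let M be a finitely generated Λ-module. If τ₁ and τ₂ are two topologies on M each of which makes M a profinite topological Λ-module, then τ₁ = τ₂ (both coincide with the ℐ-adic topology). -/
/-!
Both topologies coincide with the `ℐ`-adic one. A neighbourhood `U` of `0` in a profinite module
contains an open subgroup `H`; by the tube lemma applied to `{0} × M` inside the preimage of `H`
under scalar multiplication, some open ideal `𝔞` satisfies `𝔞 M ⊆ H ⊆ U`. Conversely, if `M` is
finitely generated, a surjection `Λⁿ → M` is a closed, hence quotient, map (`Λⁿ` is compact), and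
the preimage of `𝔞 M` contains the open set `𝔞ⁿ`, so `𝔞 M` is open.
-/

open Filter Topology

section

variable {Λ : Type*} [Ring Λ] [TopologicalSpace Λ]
  {M : Type*} [AddCommGroup M] [Module Λ M] [TopologicalSpace M]

theorem isOpen_ideal_smul_top [ContinuousAdd Λ] [CompactSpace Λ] [Module.Finite Λ M]
    [ContinuousAdd M] [ContinuousSMul Λ M] [T2Space M]
    {I : Ideal Λ} (hI : IsOpen (I : Set Λ)) : IsOpen ((I • ⊤ : Submodule Λ M) : Set M) := by
  obtain ⟨n, φ, hφ⟩ := Module.Finite.exists_fin' Λ M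
  have hcont : Continuous φ := φ.continuous_on_pi
  rw [← (hcont.isClosedMap.isQuotientMap hcont hφ).isOpen_preimage]
  refine ((I • (⊤ : Submodule Λ M)).comap φ).toAddSubgroup.isOpen_of_mem_nhds (g := 0) ?_
  filter_upwards [set_pi_mem_nhds Set.finite_univ fun i _ => hI.mem_nhds I.zero_mem] with c hc
  change φ c ∈ I • (⊤ : Submodule Λ M)
  rw [φ.pi_apply_eq_sum_univ c]
  exact Submodule.sum_mem _ fun i _ => Submodule.smul_mem_smul (hc i trivial) trivial

theorem exists_twoSidedIdeal_smul_top_subset [IsTopologicalAddGroup M] [CompactSpace M]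
    [TotallyDisconnectedSpace M] [ContinuousSMul Λ M]
    (hbasis : (𝓝 (0 : Λ)).HasBasis
      (fun 𝔞 : TwoSidedIdeal Λ => IsOpen (𝔞 : Set Λ)) (fun 𝔞 => (𝔞 : Set Λ)))
    {U : Set M} (hU : U ∈ 𝓝 0) :
    ∃ 𝔞 : TwoSidedIdeal Λ, IsOpen (𝔞 : Set Λ) ∧
      ((𝔞.asIdeal • ⊤ : Submodule Λ M) : Set M) ⊆ U := by
  obtain ⟨V, hVU, hVo, hV0⟩ := mem_nhds_iff.mp hU
  obtain ⟨H, hHV⟩ := ProfiniteGrp.exist_openNormalAddSubgroup_sub_open_nhds_of_zero hVo hV0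
  obtain ⟨u, v, huo, -, h0u, hv, hsmul⟩ :=
    generalized_tube_lemma (isCompact_singleton (x := (0 : Λ))) isCompact_univ
      (H.isOpen.preimage continuous_smul) (by rintro ⟨_, m⟩ ⟨rfl, -⟩; simp)
  obtain ⟨𝔞, h𝔞o, h𝔞u⟩ := hbasis.mem_iff.mp (huo.mem_nhds (h0u rfl))
  refine ⟨𝔞, h𝔞o, fun x hx => hVU (hHV ?_)⟩
  exact Submodule.smul_induction_on hx
    (fun a ha m _ => hsmul (a := (a, m)) ⟨h𝔞u (TwoSidedIdeal.mem_asIdeal.mp ha), hv trivial⟩)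
    (fun _ _ => H.add_mem)

theorem hasBasis_nhds_zero_twoSidedIdeal_smul_top [IsTopologicalRing Λ] [CompactSpace Λ]
    [Module.Finite Λ M] [IsTopologicalAddGroup M] [CompactSpace M] [T2Space M]
    [TotallyDisconnectedSpace M] [ContinuousSMul Λ M]
    (hbasis : (𝓝 (0 : Λ)).HasBasis
      (fun 𝔞 : TwoSidedIdeal Λ => IsOpen (𝔞 : Set Λ)) (fun 𝔞 => (𝔞 : Set Λ))) :
    (𝓝 (0 : M)).HasBasis (fun 𝔞 : TwoSidedIdeal Λ => IsOpen (𝔞 : Set Λ))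
      (fun 𝔞 => ((𝔞.asIdeal • ⊤ : Submodule Λ M) : Set M)) :=
  ⟨fun _ => ⟨exists_twoSidedIdeal_smul_top_subset hbasis, fun ⟨_, h𝔞, hsub⟩ =>
    mem_of_superset ((isOpen_ideal_smul_top h𝔞).mem_nhds (zero_mem _)) hsub⟩⟩

end

theorem statement8_general
    (Λ : Type*) [Ring Λ] [TopologicalSpace Λ] [IsTopologicalRing Λ]
    [CompactSpace Λ]
    (hbasis : (nhds (0 : Λ)).HasBasis
      (fun 𝔞 : TwoSidedIdeal Λ => IsOpen (𝔞 : Set Λ)) (fun 𝔞 => (𝔞 : Set Λ)))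
    (M : Type*) [AddCommGroup M] [Module Λ M] [Module.Finite Λ M]
    (τ₁ τ₂ : TopologicalSpace M)
    (h₁ : @IsTopologicalAddGroup M τ₁ _ ∧ @CompactSpace M τ₁ ∧ @T2Space M τ₁ ∧
      @TotallyDisconnectedSpace M τ₁ ∧ @ContinuousSMul Λ M _ _ τ₁)
    (h₂ : @IsTopologicalAddGroup M τ₂ _ ∧ @CompactSpace M τ₂ ∧ @T2Space M τ₂ ∧
      @TotallyDisconnectedSpace M τ₂ ∧ @ContinuousSMul Λ M _ _ τ₂) :
    τ₁ = τ₂ := by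
  have hasBasis : ∀ τ : TopologicalSpace M, @IsTopologicalAddGroup M τ _ ∧ @CompactSpace M τ ∧
      @T2Space M τ ∧ @TotallyDisconnectedSpace M τ ∧ @ContinuousSMul Λ M _ _ τ →
      (@nhds M τ 0).HasBasis (fun 𝔞 : TwoSidedIdeal Λ => IsOpen (𝔞 : Set Λ))
        (fun 𝔞 => ((𝔞.asIdeal • ⊤ : Submodule Λ M) : Set M)) :=
    fun _ ⟨_, _, _, _, _⟩ => hasBasis_nhds_zero_twoSidedIdeal_smul_top hbasis
  exact IsTopologicalAddGroup.ext h₁.1 h₂.1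
    ((hasBasis τ₁ h₁).eq_of_same_basis (hasBasis τ₂ h₂))

/-- Let `Λ` be a profinite ring whose open two-sided ideals form a
fundamental system of neighborhoods of `0`, and let `M` be a finitely generated
`Λ`-module.  If `τ₁` and `τ₂` are two topologies on `M` each of which makes `M` a
profinite topological `Λ`-module, then `τ₁ = τ₂`. -/
theorem statement8
    (Λ : Type*) [Ring Λ] [TopologicalSpace Λ] [IsTopologicalRing Λ]
    [CompactSpace Λ] [T2Space Λ] [TotallyDisconnectedSpace Λ]
    (hbasis : (nhds (0 : Λ)).HasBasis
      (fun 𝔞 : TwoSidedIdeal Λ => IsOpen (𝔞 : Set Λ)) (fun 𝔞 => (𝔞 : Set Λ)))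
    (M : Type*) [AddCommGroup M] [Module Λ M] [Module.Finite Λ M]
    (τ₁ τ₂ : TopologicalSpace M)
    (h₁ : @IsTopologicalAddGroup M τ₁ _ ∧ @CompactSpace M τ₁ ∧ @T2Space M τ₁ ∧
      @TotallyDisconnectedSpace M τ₁ ∧ @ContinuousSMul Λ M _ _ τ₁)
    (h₂ : @IsTopologicalAddGroup M τ₂ _ ∧ @CompactSpace M τ₂ ∧ @T2Space M τ₂ ∧
      @TotallyDisconnectedSpace M τ₂ ∧ @ContinuousSMul Λ M _ _ τ₂) :
    τ₁ = τ₂ :=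
  statement8_general Λ hbasis M τ₁ τ₂ h₁ h₂
end

section
/- Let Λ be a profinite ring whose open two-sided ideals form a fundamental system of neighborhoods of 0. Let P be a profinite topological Λ-module that is finitely generated over Λ and which is a projective object in the category of profinite topological Λ-modules, in the sense that for every continuous surjective Λ-linear map ε : M → N of profinite topological Λ-modules and every continuous Λ-linear map α : P → N there exists a continuous Λ-linear map β : P → M with ε ∘ β = α. Then P is a projective Λ-module in the abstract sense (a direct summand of a finite free Λ-module). -/
theorem Module.Finite.exists_continuous_surjective_pi (R M : Type*) [Semiring R]
    [TopologicalSpace R] [AddCommMonoid M] [Module R M] [Module.Finite R M] [TopologicalSpace M]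
    [ContinuousAdd M] [ContinuousSMul R M] :
    ∃ (n : ℕ) (f : (Fin n → R) →ₗ[R] M), Continuous f ∧ Function.Surjective f := by
  obtain ⟨n, f, hf⟩ := Module.Finite.exists_fin' R M
  exact ⟨n, f, f.continuous_on_pi, hf⟩

theorem statement9_general
    (Λ : Type u) [Ring Λ] [TopologicalSpace Λ] [IsTopologicalRing Λ]
    [CompactSpace Λ] [T2Space Λ] [TotallyDisconnectedSpace Λ]
    (P : Type u) [AddCommGroup P] [Module Λ P] [Module.Finite Λ P]
    [TopologicalSpace P] [IsTopologicalAddGroup P] [CompactSpace P] [T2Space P]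
    [TotallyDisconnectedSpace P] [ContinuousSMul Λ P]
    (hproj : ∀ (M N : Type u) [AddCommGroup M] [Module Λ M] [TopologicalSpace M]
      [IsTopologicalAddGroup M] [CompactSpace M] [T2Space M] [TotallyDisconnectedSpace M]
      [ContinuousSMul Λ M]
      [AddCommGroup N] [Module Λ N] [TopologicalSpace N] [IsTopologicalAddGroup N]
      [CompactSpace N] [T2Space N] [TotallyDisconnectedSpace N] [ContinuousSMul Λ N]
      (ε : M →ₗ[Λ] N), Continuous ε → Function.Surjective ε →
      ∀ α : P →ₗ[Λ] N, Continuous α →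
        ∃ β : P →ₗ[Λ] M, Continuous β ∧ ε.comp β = α) :
    Module.Projective Λ P := by
  obtain ⟨n, f, hf_cont, hf_surj⟩ := Module.Finite.exists_continuous_surjective_pi Λ P
  -- The finite free module `Fin n → Λ` is itself a profinite topological `Λ`-module,
  -- so the identity of `P` lifts along `f`, which makes `f` split.
  obtain ⟨s, -, hs⟩ := hproj (Fin n → Λ) P f hf_cont hf_surj LinearMap.id continuous_id
  exact Module.Projective.of_split s f hs

/-- Let `Λ` be a profinite ring whose open two-sided ideals form a
fundamental system of neighborhoods of `0`.  Let `P` be a profinite topological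
`Λ`-module, finitely generated over `Λ`, which is a projective object in the category
of profinite topological `Λ`-modules (every continuous surjection `ε : M ↠ N` and
continuous map `α : P → N` admit a continuous lift `β : P → M` with `ε ∘ β = α`).
Then `P` is a projective `Λ`-module in the abstract sense. -/
theorem statement9
    (Λ : Type u) [Ring Λ] [TopologicalSpace Λ] [IsTopologicalRing Λ]
    [CompactSpace Λ] [T2Space Λ] [TotallyDisconnectedSpace Λ]
    (hbasis : (nhds (0 : Λ)).HasBasis
      (fun 𝔞 : TwoSidedIdeal Λ => IsOpen (𝔞 : Set Λ)) (fun 𝔞 => (𝔞 : Set Λ)))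
    (P : Type u) [AddCommGroup P] [Module Λ P] [Module.Finite Λ P]
    [TopologicalSpace P] [IsTopologicalAddGroup P] [CompactSpace P] [T2Space P]
    [TotallyDisconnectedSpace P] [ContinuousSMul Λ P]
    (hproj : ∀ (M N : Type u) [AddCommGroup M] [Module Λ M] [TopologicalSpace M]
      [IsTopologicalAddGroup M] [CompactSpace M] [T2Space M] [TotallyDisconnectedSpace M]
      [ContinuousSMul Λ M]
      [AddCommGroup N] [Module Λ N] [TopologicalSpace N] [IsTopologicalAddGroup N]
      [CompactSpace N] [T2Space N] [TotallyDisconnectedSpace N] [ContinuousSMul Λ N]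
      (ε : M →ₗ[Λ] N), Continuous ε → Function.Surjective ε →
      ∀ α : P →ₗ[Λ] N, Continuous α →
        ∃ β : P →ₗ[Λ] M, Continuous β ∧ ε.comp β = α) :
    Module.Projective Λ P :=
  statement9_general Λ P hproj
end

section
/- Let Λ be a profinite ring whose open two-sided ideals form a fundamental system of neighborhoods of 0. Let P be a finitely generated projective Λ-module, endowed with a topology making it a profinite topological Λ-module (e.g., the ℐ-adic topology). Then for every continuous surjective Λ-linear map ε : M → N of profinite topological Λ-modules and every continuous Λ-linear map α : P → N, there exists a continuous Λ-linear map β : P → M with ε ∘ β = α; that is, P is a projective object in the category of profinite topological Λ-modules with continuous Λ-linear maps. -/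
/-!
Projectivity of `P` gives a `Λ`-linear lift `β` of `α` along `ε`; the point is that `β` is
automatically continuous. Choose a surjection `Λⁿ → P`: it is continuous, hence closed since
`Λⁿ` is compact and `P` Hausdorff, hence a quotient map. So the topology of `P` is the one
coinduced from `Λⁿ`, i.e. the module topology, and every linear map out of `P` is continuous.
-/

theorem IsModuleTopology.of_compactSpace (R A : Type*) [Ring R] [TopologicalSpace R]
    [IsTopologicalRing R] [CompactSpace R] [AddCommGroup A] [Module R A] [Module.Finite R A]
    [TopologicalSpace A] [T2Space A] [ContinuousAdd A] [ContinuousSMul R A] :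
    IsModuleTopology R A := by
  obtain ⟨n, π, hπ⟩ := Module.Finite.exists_fin' R A
  have hπc : Continuous π := IsModuleTopology.continuous_of_linearMap π
  exact ⟨(hπc.isClosedMap.isQuotientMap hπc hπ).eq_coinduced.trans
    (ModuleTopology.eq_coinduced_of_surjective hπ).symm⟩

theorem statement10_general
    (Λ : Type*) [Ring Λ] [TopologicalSpace Λ] [IsTopologicalRing Λ]
    [CompactSpace Λ]
    (P : Type*) [AddCommGroup P] [Module Λ P] [Module.Finite Λ P] [Module.Projective Λ P]
    [TopologicalSpace P] [IsTopologicalAddGroup P] [T2Space P]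
    [ContinuousSMul Λ P]
    (M N : Type*) [AddCommGroup M] [Module Λ M] [TopologicalSpace M]
    [IsTopologicalAddGroup M]
    [ContinuousSMul Λ M]
    [AddCommGroup N] [Module Λ N]
    (ε : M →ₗ[Λ] N) (hεs : Function.Surjective ε)
    (α : P →ₗ[Λ] N) :
    ∃ β : P →ₗ[Λ] M, Continuous β ∧ ε.comp β = α := by
  obtain ⟨β, hβ⟩ := Module.projective_lifting_property ε α hεs
  have := IsModuleTopology.of_compactSpace Λ P
  exact ⟨β, IsModuleTopology.continuous_of_linearMap β, hβ⟩

/-- Let `Λ` be a profinite ring whose open two-sided ideals form a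
fundamental system of neighborhoods of `0`, and let `P` be a finitely generated
projective `Λ`-module endowed with a topology making it a profinite topological
`Λ`-module.  Then for every continuous surjective `Λ`-linear map `ε : M → N` of
profinite topological `Λ`-modules and every continuous `Λ`-linear `α : P → N`
there is a continuous `Λ`-linear `β : P → M` with `ε ∘ β = α`; that is, `P` is a
projective object in the category of profinite topological `Λ`-modules. -/
theorem statement10
    (Λ : Type*) [Ring Λ] [TopologicalSpace Λ] [IsTopologicalRing Λ]
    [CompactSpace Λ] [T2Space Λ] [TotallyDisconnectedSpace Λ]
    (hbasis : (nhds (0 : Λ)).HasBasis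
      (fun 𝔞 : TwoSidedIdeal Λ => IsOpen (𝔞 : Set Λ)) (fun 𝔞 => (𝔞 : Set Λ)))
    (P : Type*) [AddCommGroup P] [Module Λ P] [Module.Finite Λ P] [Module.Projective Λ P]
    [TopologicalSpace P] [IsTopologicalAddGroup P] [CompactSpace P] [T2Space P]
    [TotallyDisconnectedSpace P] [ContinuousSMul Λ P]
    (M N : Type*) [AddCommGroup M] [Module Λ M] [TopologicalSpace M]
    [IsTopologicalAddGroup M] [CompactSpace M] [T2Space M] [TotallyDisconnectedSpace M]
    [ContinuousSMul Λ M]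
    [AddCommGroup N] [Module Λ N] [TopologicalSpace N] [IsTopologicalAddGroup N]
    [CompactSpace N] [T2Space N] [TotallyDisconnectedSpace N] [ContinuousSMul Λ N]
    (ε : M →ₗ[Λ] N) (hεc : Continuous ε) (hεs : Function.Surjective ε)
    (α : P →ₗ[Λ] N) (hα : Continuous α) :
    ∃ β : P →ₗ[Λ] M, Continuous β ∧ ε.comp β = α :=
  statement10_general Λ P M N ε hεs α
end

section
/- Let Λ be a profinite ring, let G be a profinite group, and let M be a profinite topological Λ-module equipped with a continuous Λ-linear action of G (i.e., the map G × M → M is continuous and g·(λ·x) = λ·(g·x) for all g ∈ G, λ ∈ Λ, x ∈ M). Then every open Λ-submodule of M contains an open Λ-submodule that is stable under the G-action; consequently M has a fundamental system of neighborhoods of 0 consisting of open G-stable Λ-submodules. -/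
/-!
Given an open additive subgroup `H` of `M`, the set of `x` with `c • g • x ∈ H` for all
`c ∈ Λ`, `g ∈ G` is a `G`-stable `Λ`-submodule contained in `H`. It is open: it contains `0`,
and by the tube lemma over the compact space `Λ × G` it contains a whole neighbourhood of `0`,
hence is open, being an additive subgroup. Since a profinite abelian group has a basis of
neighbourhoods of `0` made of open subgroups, both claims follow.
-/

open Filter Topology

theorem eventually_forall_mem_of_forall_mem {K X Y : Type*} [TopologicalSpace K] [CompactSpace K]
    [TopologicalSpace X] [TopologicalSpace Y] {f : K → X → Y} (hf : Continuous (Function.uncurry f))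
    {U : Set Y} (hU : IsOpen U) {x₀ : X} (h₀ : ∀ k, f k x₀ ∈ U) :
    ∀ᶠ x in 𝓝 x₀, ∀ k, f k x ∈ U := by
  have hf' : Continuous fun p : X × K => f p.2 p.1 := hf.comp continuous_swap
  simpa using isCompact_univ.eventually_forall_of_forall_eventually
    (P := fun x k => f k x ∈ U) fun k _ => hf'.continuousAt.preimage_mem_nhds (hU.mem_nhds (h₀ k))

namespace AddSubgroup

variable {Λ G M : Type*} [Ring Λ] [Monoid G] [AddCommGroup M] [Module Λ M]
  [DistribMulAction G M] [SMulCommClass G Λ M]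

variable (Λ G) in
def stableSubmoduleCore (H : AddSubgroup M) : Submodule Λ M where
  carrier := {x | ∀ (c : Λ) (g : G), c • g • x ∈ H}
  add_mem' hx hy c g := by
    rw [smul_add, smul_add]
    exact H.add_mem (hx c g) (hy c g)
  zero_mem' c g := by
    rw [smul_zero, smul_zero]
    exact H.zero_mem
  smul_mem' a x hx c g := by
    rw [smul_comm g a, smul_smul]
    exact hx (c * a) g

theorem mem_stableSubmoduleCore {H : AddSubgroup M} {x : M} :
    x ∈ stableSubmoduleCore Λ G H ↔ ∀ (c : Λ) (g : G), c • g • x ∈ H :=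
  Iff.rfl

theorem stableSubmoduleCore_le (H : AddSubgroup M) :
    (stableSubmoduleCore Λ G H).toAddSubgroup ≤ H := fun x hx => by
  simpa using mem_stableSubmoduleCore.mp hx 1 1

theorem smul_mem_stableSubmoduleCore {H : AddSubgroup M} (g : G) {x : M}
    (hx : x ∈ stableSubmoduleCore Λ G H) : g • x ∈ stableSubmoduleCore Λ G H :=
  fun c g' => by
    rw [smul_smul]
    exact hx c (g' * g)

theorem isOpen_stableSubmoduleCore [TopologicalSpace Λ] [CompactSpace Λ]
    [TopologicalSpace G] [CompactSpace G] [TopologicalSpace M] [IsTopologicalAddGroup M]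
    [ContinuousSMul Λ M] (hG : Continuous fun p : G × M => p.1 • p.2)
    {H : AddSubgroup M} (hH : IsOpen (H : Set M)) :
    IsOpen (stableSubmoduleCore Λ G H : Set M) := by
  have hcont : Continuous fun p : (Λ × G) × M => p.1.1 • p.1.2 • p.2 :=
    continuous_fst.fst.smul (hG.comp (continuous_fst.snd.prodMk continuous_snd))
  have hnhds : ∀ᶠ x in 𝓝 (0 : M), ∀ k : Λ × G, k.1 • k.2 • x ∈ H :=
    eventually_forall_mem_of_forall_mem hcont hH fun k => by simp
  exact (stableSubmoduleCore Λ G H).toAddSubgroup.isOpen_of_mem_nhds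
    (g := 0) (mem_of_superset hnhds fun x hx c g => hx (c, g))

end AddSubgroup

theorem statement12_general
    (Λ : Type*) [Ring Λ] [TopologicalSpace Λ]
    [CompactSpace Λ]
    (G : Type*) [Group G] [TopologicalSpace G]
    [CompactSpace G]
    (M : Type*) [AddCommGroup M] [Module Λ M] [TopologicalSpace M]
    [IsTopologicalAddGroup M] [CompactSpace M] [TotallyDisconnectedSpace M]
    [ContinuousSMul Λ M] [DistribMulAction G M] [SMulCommClass G Λ M]
    (hG : Continuous fun p : G × M => p.1 • p.2) :
    (∀ N : Submodule Λ M, IsOpen (N : Set M) →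
      ∃ N₀ : Submodule Λ M, IsOpen (N₀ : Set M) ∧ (N₀ : Set M) ⊆ (N : Set M) ∧
        ∀ g : G, ∀ x ∈ N₀, g • x ∈ N₀) ∧
    (nhds (0 : M)).HasBasis
      (fun N₀ : Submodule Λ M => IsOpen (N₀ : Set M) ∧ ∀ g : G, ∀ x ∈ N₀, g • x ∈ N₀)
      (fun N₀ => (N₀ : Set M)) := by
  have core_spec (H : AddSubgroup M) (hH : IsOpen (H : Set M)) :
      IsOpen (H.stableSubmoduleCore Λ G : Set M) ∧
        (H.stableSubmoduleCore Λ G : Set M) ⊆ H ∧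
        ∀ g : G, ∀ x ∈ H.stableSubmoduleCore Λ G, g • x ∈ H.stableSubmoduleCore Λ G :=
    ⟨H.isOpen_stableSubmoduleCore hG hH, H.stableSubmoduleCore_le,
      fun g _ => AddSubgroup.smul_mem_stableSubmoduleCore g⟩
  refine ⟨fun N hN => ⟨_, core_spec N.toAddSubgroup hN⟩, ⟨fun s => ⟨fun hs => ?_, ?_⟩⟩⟩
  · obtain ⟨U, hUs, hU, hU₀⟩ := mem_nhds_iff.mp hs
    obtain ⟨H, hHU⟩ := ProfiniteGrp.exist_openNormalAddSubgroup_sub_open_nhds_of_zero hU hU₀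
    obtain ⟨hopen, hle, hstable⟩ := core_spec H.toAddSubgroup H.isOpen
    exact ⟨_, ⟨hopen, hstable⟩, hle.trans (hHU.trans hUs)⟩
  · rintro ⟨N₀, ⟨hopen, -⟩, hsub⟩
    exact mem_of_superset (hopen.mem_nhds N₀.zero_mem) hsub

/-- Let `Λ` be a profinite ring, `G` a profinite group, and `M` a
profinite topological `Λ`-module with a continuous `Λ`-linear action of `G`.  Then
every open `Λ`-submodule of `M` contains an open `G`-stable `Λ`-submodule;
consequently `M` has a fundamental system of neighborhoods of `0` consisting of open
`G`-stable `Λ`-submodules. -/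
theorem statement12
    (Λ : Type*) [Ring Λ] [TopologicalSpace Λ] [IsTopologicalRing Λ]
    [CompactSpace Λ] [T2Space Λ] [TotallyDisconnectedSpace Λ]
    (G : Type*) [Group G] [TopologicalSpace G] [IsTopologicalGroup G]
    [CompactSpace G] [T2Space G] [TotallyDisconnectedSpace G]
    (M : Type*) [AddCommGroup M] [Module Λ M] [TopologicalSpace M]
    [IsTopologicalAddGroup M] [CompactSpace M] [T2Space M] [TotallyDisconnectedSpace M]
    [ContinuousSMul Λ M] [DistribMulAction G M] [SMulCommClass G Λ M]
    (hG : Continuous fun p : G × M => p.1 • p.2) :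
    (∀ N : Submodule Λ M, IsOpen (N : Set M) →
      ∃ N₀ : Submodule Λ M, IsOpen (N₀ : Set M) ∧ (N₀ : Set M) ⊆ (N : Set M) ∧
        ∀ g : G, ∀ x ∈ N₀, g • x ∈ N₀) ∧
    (nhds (0 : M)).HasBasis
      (fun N₀ : Submodule Λ M => IsOpen (N₀ : Set M) ∧ ∀ g : G, ∀ x ∈ N₀, g • x ∈ N₀)
      (fun N₀ => (N₀ : Set M)) :=
  statement12_general Λ G M hG
end

section
/- Let G be a profinite group and let M be a compact Hausdorff abelian topological group equipped with a continuous action of G by (additive) automorphisms, i.e., the action map G × M → M is continuous and each g ∈ G acts as a continuous group automorphism. Define an action of G on the Pontryagin dual M^∨ = Hom_cts(M, ℝ/ℤ) (equipped with the compact-open topology, which is discrete since M is compact) by (g·f)(m) = f(g⁻¹·m). Then this action map G × M^∨ → M^∨ is continuous; equivalently, every f ∈ M^∨ is fixed by an open subgroup of G. -/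
/-!
The map `(g, m) ↦ f (g • m) - f m` is continuous and vanishes at `g = 1`, so by compactness of `M`
it takes values in the ball of radius `1/4` for all `g` in some neighbourhood of `1`, which in a
profinite group contains an open subgroup. For such `g` the character `m ↦ f (g • m) - f m` has
image in that ball; but `ℝ/ℤ` has no small subgroups, so the character is zero.
-/

open Filter Topology

namespace AddCircle

theorem eq_zero_of_forall_norm_nsmul_lt {p : ℝ} {x : AddCircle p}
    (h : ∀ n : ℕ, ‖n • x‖ < |p| / 4) : x = 0 := by
  have hp : p ≠ 0 := by simpa using h 0
  obtain ⟨s, rfl, hs⟩ : ∃ s : ℝ, (s : AddCircle p) = x ∧ |s| < |p| / 4 := by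
    induction x using QuotientAddGroup.induction_on with | H t => ?_
    refine ⟨t - round (p⁻¹ * t) * p, ?_, ?_⟩
    · rw [coe_sub, sub_eq_self, ← zsmul_eq_mul, coe_zsmul, coe_period, smul_zero]
    · simpa [norm_eq] using h 1
  -- Each step adds at most `|p| / 4`, so `n * s` never leaves the range where `‖·‖ = |·|`.
  have hsmall : ∀ n : ℕ, |n * s| < |p| / 4 := by
    intro n
    induction n with
    | zero => simpa using hs.trans_le' (abs_nonneg s)
    | succ n ih =>
      have hle : |(n + 1 : ℕ) * s| ≤ |p| / 2 := by
        rw [Nat.cast_succ, add_one_mul]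
        linarith [abs_add_le (n * s) s]
      rw [← norm_coe_eq_abs_iff p hp] at hle
      rw [← hle, ← nsmul_eq_mul, coe_nsmul]
      exact h (n + 1)
  obtain rfl : s = 0 := by
    by_contra hs0
    obtain ⟨n, hn⟩ := exists_nat_gt (|p| / 4 / |s|)
    rw [div_lt_iff₀ (abs_pos.mpr hs0)] at hn
    exact (hsmall n).not_gt (by rwa [abs_mul, Nat.abs_cast])
  simp

theorem addMonoidHom_eq_zero_of_forall_norm_lt {p : ℝ} {A : Type*} [AddMonoid A]
    (φ : A →+ AddCircle p) (h : ∀ a, ‖φ a‖ < |p| / 4) : φ = 0 := by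
  ext a
  exact eq_zero_of_forall_norm_nsmul_lt fun n => map_nsmul φ n a ▸ h (n • a)

end AddCircle

theorem eventually_forall_sub_mem_of_continuous_smul {G M A : Type*} [Monoid G]
    [TopologicalSpace G] [MulAction G M] [TopologicalSpace M] [CompactSpace M]
    [AddGroup A] [TopologicalSpace A] [ContinuousSub A]
    (hact : Continuous fun p : G × M => p.1 • p.2) {f : M → A} (hf : Continuous f)
    {V : Set A} (hV : V ∈ 𝓝 0) : ∀ᶠ g : G in 𝓝 1, ∀ m, f (g • m) - f m ∈ V := by
  have hcont : Continuous fun p : G × M => f (p.1 • p.2) - f p.2 :=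
    (hf.comp hact).sub (hf.comp continuous_snd)
  simpa using isCompact_univ.eventually_forall_of_forall_eventually
    (P := fun g m => f (g • m) - f m ∈ V) fun m _ =>
      hcont.continuousAt.preimage_mem_nhds (by simpa using hV)

theorem statement13_general
    (G : Type*) [Group G] [TopologicalSpace G] [IsTopologicalGroup G]
    [CompactSpace G] [TotallyDisconnectedSpace G]
    (M : Type*) [AddCommGroup M] [TopologicalSpace M]
    [CompactSpace M] [DistribMulAction G M]
    (hact : Continuous fun p : G × M => p.1 • p.2)
    (f : M →+ AddCircle (1 : ℝ)) (hf : Continuous f) :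
    ∃ U : Subgroup G, IsOpen (U : Set G) ∧ ∀ u ∈ U, ∀ m : M, f (u • m) = f m := by
  have hball : Metric.ball (0 : AddCircle (1 : ℝ)) (|1| / 4) ∈ 𝓝 0 :=
    Metric.ball_mem_nhds 0 (by norm_num)
  obtain ⟨U, hU, hU_open, h1U⟩ :=
    mem_nhds_iff.mp (eventually_forall_sub_mem_of_continuous_smul hact hf hball)
  obtain ⟨H, hHU⟩ := ProfiniteGrp.exist_openNormalSubgroup_sub_open_nhds_of_one hU_open h1U
  refine ⟨H.toSubgroup, H.isOpen, fun g hg m => ?_⟩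
  have hzero : f.comp (DistribSMul.toAddMonoidHom M g) - f = 0 :=
    AddCircle.addMonoidHom_eq_zero_of_forall_norm_lt _ fun m' => by
      simpa using hU (hHU hg) m'
  exact sub_eq_zero.mp (DFunLike.congr_fun hzero m)

/-- Let `G` be a profinite group and `M` a compact Hausdorff abelian
topological group with a continuous action of `G` by additive automorphisms.  Then the
induced `G`-action on the Pontryagin dual `M^∨ = Hom_cts(M, ℝ/ℤ)` (which is discrete)
is continuous; equivalently, every continuous homomorphism `f : M → ℝ/ℤ` is fixed by
an open subgroup of `G`. -/
theorem statement13
    (G : Type*) [Group G] [TopologicalSpace G] [IsTopologicalGroup G]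
    [CompactSpace G] [T2Space G] [TotallyDisconnectedSpace G]
    (M : Type*) [AddCommGroup M] [TopologicalSpace M] [IsTopologicalAddGroup M]
    [CompactSpace M] [T2Space M] [DistribMulAction G M]
    (hact : Continuous fun p : G × M => p.1 • p.2)
    (f : M →+ AddCircle (1 : ℝ)) (hf : Continuous f) :
    ∃ U : Subgroup G, IsOpen (U : Set G) ∧ ∀ u ∈ U, ∀ m : M, f (u • m) = f m :=
  statement13_general G M hact f hf
end

section
/- Let R be a commutative ring, G a group, Q a finite group, and φ : G → Q a group homomorphism. Let M be an R-module equipped with an action of G by R-linear automorphisms. Equip R[Q] ⊗_R M with the G-action g·(q ⊗ x) = (φ(g)q) ⊗ (g·x) and equip Hom_R(R[Q], M) with the G-action (g·f)(q) = g·(f(φ(g)⁻¹q)). Then the map R[Q] ⊗_R M → Hom_R(R[Q], M) sending β ⊗ x (for β ∈ Q, x ∈ M) to the R-linear map determined on the basis Q of R[Q] by β' ↦ x if β' = β and β' ↦ 0 otherwise, is an isomorphism of R[G]-modules, and it is functorial (natural) in M. -/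
open scoped TensorProduct

section ThetaSetup

variable (R Q : Type*) [CommRing R] [Group Q] [Fintype Q]

/-- The canonical `R`-bilinear pairing `R[Q] × R[Q] → R`, `(y, z) ↦ ∑_{q ∈ Q} y_q z_q`. -/
noncomputable def groupAlgebraPairing :
    MonoidAlgebra R Q →ₗ[R] MonoidAlgebra R Q →ₗ[R] R :=
  LinearMap.mk₂ R (fun y z => ∑ q : Q, y.coeff q * z.coeff q)
    (fun y y' z => by
      rw [← Finset.sum_add_distrib]
      exact Finset.sum_congr rfl fun q _ => by
        rw [show (y + y').coeff q = y.coeff q + y'.coeff q from Finsupp.add_apply y.coeff y'.coeff q, add_mul])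
    (fun r y z => by
      rw [smul_eq_mul, Finset.mul_sum]
      exact Finset.sum_congr rfl fun q _ => by
        rw [show (r • y).coeff q = r * y.coeff q from rfl, mul_assoc])
    (fun y z z' => by
      rw [← Finset.sum_add_distrib]
      exact Finset.sum_congr rfl fun q _ => by
        rw [show (z + z').coeff q = z.coeff q + z'.coeff q from Finsupp.add_apply z.coeff z'.coeff q, mul_add])
    (fun r y z => by
      rw [smul_eq_mul, Finset.mul_sum]
      exact Finset.sum_congr rfl fun q _ => by
        rw [show (r • z).coeff q = r * z.coeff q from rfl, mul_left_comm])

variable (M : Type*) [AddCommGroup M] [Module R M]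

/-- The canonical `R`-linear map `R[Q] ⊗_R M → Hom_R(R[Q], M)` sending `β ⊗ x`
(for `β ∈ Q`, `x ∈ M`) to the `R`-linear map determined on the basis `Q` by
`β' ↦ x` if `β' = β` and `β' ↦ 0` otherwise. -/
noncomputable def theta :
    MonoidAlgebra R Q ⊗[R] M →ₗ[R] (MonoidAlgebra R Q →ₗ[R] M) :=
  TensorProduct.lift
    (LinearMap.mk₂ R (fun y x => (groupAlgebraPairing R Q y).smulRight x)
      (fun y y' x => by ext z; simp [add_smul])
      (fun r y x => by ext z; simp [mul_smul])
      (fun y x x' => by ext z; simp [smul_add])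
      (fun r y x => by ext z; exact smul_comm _ r x))

end ThetaSetup

/-! Since the pairing makes the basis `Q` of `R[Q]` orthonormal, `θ` is the composite of the
standard isomorphisms `R[Q] ⊗ M ≅ (Q →₀ M) ≅ M^Q ≅ Hom_R(R[Q], M)`. Equivariance comes down to
the invariance of the Kronecker delta under left translation in `Q`, and naturality to the
`R`-linearity of `θ (y ⊗ x)` in `x`. -/

section Theta

variable (R Q : Type*) [CommRing R] [Group Q] [Fintype Q]
variable (M : Type*) [AddCommGroup M] [Module R M]

lemma theta_tmul_apply_single (y : MonoidAlgebra R Q) (x : M) (q : Q) :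
    theta R Q M (y ⊗ₜ[R] x) (MonoidAlgebra.single q 1) = y.coeff q • x := by
  classical
  simp [theta, groupAlgebraPairing, MonoidAlgebra.coeff_single, Finsupp.single_apply]

lemma theta_single_tmul_apply_single [DecidableEq Q] (β β' : Q) (x : M) :
    theta R Q M (MonoidAlgebra.single β (1 : R) ⊗ₜ[R] x) (MonoidAlgebra.single β' 1) =
      if β' = β then x else 0 := by
  rw [theta_tmul_apply_single, MonoidAlgebra.coeff_single, Finsupp.single_apply]
  split_ifs <;> simp_all [eq_comm]

noncomputable def thetaEquiv [DecidableEq Q] :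
    MonoidAlgebra R Q ⊗[R] M ≃ₗ[R] (MonoidAlgebra R Q →ₗ[R] M) :=
  TensorProduct.equivFinsuppOfBasisLeft (MonoidAlgebra.basis Q R) ≪≫ₗ
    Finsupp.linearEquivFunOnFinite R M Q ≪≫ₗ (MonoidAlgebra.basis Q R).constr R

lemma theta_eq_thetaEquiv [DecidableEq Q] : theta R Q M = (thetaEquiv R Q M).toLinearMap := by
  refine TensorProduct.ext' fun y x => (MonoidAlgebra.basis Q R).ext fun q => ?_
  rw [thetaEquiv, LinearEquiv.coe_coe, LinearEquiv.trans_apply, LinearEquiv.trans_apply,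
    Module.Basis.constr_basis, Finsupp.linearEquivFunOnFinite_apply,
    TensorProduct.equivFinsuppOfBasisLeft_apply_tmul_apply, MonoidAlgebra.basis_apply,
    theta_tmul_apply_single]
  rfl

lemma theta_bijective : Function.Bijective (theta R Q M) := by
  classical
  rw [theta_eq_thetaEquiv]
  exact (thetaEquiv R Q M).bijective

lemma theta_lTensor {M' : Type*} [AddCommGroup M'] [Module R M'] (h : M →ₗ[R] M')
    (t : MonoidAlgebra R Q ⊗[R] M) :
    theta R Q M' (h.lTensor (MonoidAlgebra R Q) t) = h.comp (theta R Q M t) := by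
  induction t using TensorProduct.induction_on with
  | zero => simp
  | tmul y x =>
    refine (MonoidAlgebra.basis Q R).ext fun q => ?_
    rw [MonoidAlgebra.basis_apply, LinearMap.lTensor_tmul, LinearMap.comp_apply,
      theta_tmul_apply_single, theta_tmul_apply_single, map_smul]
  | add t t' ht ht' => rw [map_add, map_add, ht, ht', map_add, LinearMap.comp_add]

end Theta

universe v

theorem statement17_general
    (R Q G : Type*) [CommRing R] [Group Q] [Fintype Q] [DecidableEq Q] [Group G]
    (φ : G →* Q)
    (M : Type v) [AddCommGroup M] [Module R M]
    [DistribMulAction G M] :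
    Function.Bijective (theta R Q M) ∧
    (∀ (β β' : Q) (x : M),
      theta R Q M (MonoidAlgebra.single β (1 : R) ⊗ₜ[R] x) (MonoidAlgebra.single β' 1) =
        if β' = β then x else 0) ∧
    (∀ (g : G) (β : Q) (x : M) (q : Q),
      theta R Q M (MonoidAlgebra.single (φ g * β) (1 : R) ⊗ₜ[R] (g • x))
          (MonoidAlgebra.single q 1) =
        g • theta R Q M (MonoidAlgebra.single β (1 : R) ⊗ₜ[R] x)
          (MonoidAlgebra.single ((φ g)⁻¹ * q) 1)) ∧
    (∀ (M' : Type v) [AddCommGroup M'] [Module R M']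
      [DistribMulAction G M'] [SMulCommClass G R M']
      (h : M →ₗ[R] M'), (∀ (g : G) (x : M), h (g • x) = g • h x) →
      ∀ t : MonoidAlgebra R Q ⊗[R] M,
        theta R Q M' (LinearMap.lTensor (MonoidAlgebra R Q) h t) =
          h.comp (theta R Q M t)) := by
  refine ⟨theta_bijective R Q M, theta_single_tmul_apply_single R Q M, ?_,
    fun M' _ _ _ _ h _ => theta_lTensor R Q M h⟩
  intro g β x q
  simp only [theta_single_tmul_apply_single, smul_ite, smul_zero, inv_mul_eq_iff_eq_mul]

/-- Let `R` be a commutative ring, `G` a group, `Q` a finite group,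
`φ : G → Q` a homomorphism, and `M` an `R`-module with an action of `G` by `R`-linear
automorphisms.  The canonical map `θ : R[Q] ⊗_R M → Hom_R(R[Q], M)`, given on
generators by sending `β ⊗ x` to the map `β' ↦ (if β' = β then x else 0)`, is an
isomorphism of `R[G]`-modules (bijective, and `G`-equivariant for the actions
`g·(q ⊗ x) = φ(g)q ⊗ g·x` and `(g·f)(q) = g·f(φ(g)⁻¹q)`), and it is natural in `M`. -/
theorem statement17
    (R Q G : Type*) [CommRing R] [Group Q] [Fintype Q] [DecidableEq Q] [Group G]
    (φ : G →* Q)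
    (M : Type v) [AddCommGroup M] [Module R M]
    [DistribMulAction G M] [SMulCommClass G R M] :
    Function.Bijective (theta R Q M) ∧
    (∀ (β β' : Q) (x : M),
      theta R Q M (MonoidAlgebra.single β (1 : R) ⊗ₜ[R] x) (MonoidAlgebra.single β' 1) =
        if β' = β then x else 0) ∧
    (∀ (g : G) (β : Q) (x : M) (q : Q),
      theta R Q M (MonoidAlgebra.single (φ g * β) (1 : R) ⊗ₜ[R] (g • x))
          (MonoidAlgebra.single q 1) =
        g • theta R Q M (MonoidAlgebra.single β (1 : R) ⊗ₜ[R] x)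
          (MonoidAlgebra.single ((φ g)⁻¹ * q) 1)) ∧
    (∀ (M' : Type v) [AddCommGroup M'] [Module R M']
      [DistribMulAction G M'] [SMulCommClass G R M']
      (h : M →ₗ[R] M'), (∀ (g : G) (x : M), h (g • x) = g • h x) →
      ∀ t : MonoidAlgebra R Q ⊗[R] M,
        theta R Q M' (LinearMap.lTensor (MonoidAlgebra R Q) h t) =
          h.comp (theta R Q M t)) :=
  statement17_general R Q G φ M
end
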